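/- Let V be a valuation ring with fraction field K and let h be a Lie algebra over V. Let r, r' : h → n_n(V) be Lie algebra homomorphisms into the strictly upper triangular n×n matrices over V such that, for each of r and r': (a) the entry functional λ_{i,i+1} : h → V is surjective for every i = 1,…,n−1, and (b) for all i ≠ j the map h → V × V, v ↦ (λ_{i,i+1}(v), λ_{j,j+1}(v)), is surjective (wideness over V). If there exists P ∈ GL_n(K) with P·r(v)·P^{−1} = r'(v) in M_n(K) for all v ∈ h, then there exists Q ∈ GL_n(V) with Q·r(v)·Q^{−1} = r'(v) in M_n(V) for all v ∈ h. -/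

import Mathlib

/-!
Comparing entries in `P * r v = r' v * P`, the surjectivity of the superdiagonal functionals of
`r'` forces `P` to be upper triangular, and the superdiagonal entries give
`P i i * λ_{i,i+1} v = λ'_{i,i+1} v * P (i+1) (i+1)`; surjectivity of both `λ_{i,i+1}` and
`λ'_{i,i+1}` then shows that consecutive diagonal entries of `P` differ by units of `V`.

Rescale `P` so that `P 0 0 = 1`. By induction on the distance `j - i` from the diagonal, every
entry `P i j` lies in `V`, except the top-right corner: wideness gives `v` with
`λ_{i,i+1} v = 0` and `λ_{j,j+1} v = 1`, and then the `(i, j+1)` entry of the relation expresses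
`P i j` through entries closer to the diagonal; in the last column one uses instead
`λ_{i-1,i} v = 1`, `λ_{n-2,n-1} v = 0` and the `(i-1, j)` entry. The corner entry does not
interact with strictly upper triangular matrices at all, so it can be replaced by `0`; the result
is an upper triangular matrix over `V` with unit diagonal that conjugates `r` to `r'`.
-/

theorem Fin.forall_val_eq_succ {n : ℕ} {p : Fin n → Fin n → Prop} :
    (∀ i j : Fin n, (j : ℕ) = i + 1 → p i j) ↔
      ∀ i (hi : i + 1 < n), p ⟨i, Nat.lt_of_succ_lt hi⟩ ⟨i + 1, hi⟩ := by
  refine ⟨fun H i hi => H _ _ rfl, ?_⟩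
  rintro H ⟨i, _⟩ ⟨j, hj⟩ (rfl : j = i + 1)
  exact H i hj

section Units

variable {ι V K : Type*} [CommRing V] [CommRing K] [Algebra V K]

local notation "φ" => algebraMap V K

theorem exists_unit_eq_mul_of_forall_mul_eq [IsDomain K] (hφ : Function.Injective φ) {a b : K}
    (hb : b ≠ 0) {x y : ι → V} (hxy : ∀ v, a * φ (x v) = φ (y v) * b) (hx : ∃ v, x v = 1)
    (hy : ∃ v, y v = 1) : ∃ u : Vˣ, a = φ u * b := by
  obtain ⟨v₁, hv₁⟩ := hx
  obtain ⟨v₂, hv₂⟩ := hy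
  have h₁ := hxy v₁
  have h₂ := hxy v₂
  rw [hv₁, map_one, mul_one] at h₁
  rw [hv₂, map_one, one_mul] at h₂
  have hyx : y v₁ * x v₂ = 1 := hφ <| mul_right_cancel₀ hb <| by
    calc φ (y v₁ * x v₂) * b = φ (y v₁) * b * φ (x v₂) := by rw [map_mul]; ring
      _ = φ 1 * b := by rw [← h₁, h₂, map_one, one_mul]
  exact ⟨⟨y v₁, x v₂, hyx, by rw [mul_comm, hyx]⟩, h₁⟩

theorem exists_unit_eq_mul_apply_zero {m : ℕ} {d : Fin (m + 1) → K}
    (hd : ∀ i j : Fin (m + 1), (j : ℕ) = i + 1 → ∃ u : Vˣ, d i = φ u * d j) (i : Fin (m + 1)) :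
    ∃ u : Vˣ, d i = φ u * d 0 := by
  induction i using Fin.induction with
  | zero => exact ⟨1, by rw [Units.val_one, map_one, one_mul]⟩
  | succ i ih =>
    obtain ⟨w, hw⟩ := ih
    obtain ⟨u, hu⟩ := hd i.castSucc i.succ (by simp)
    refine ⟨u⁻¹ * w, ?_⟩
    rw [Units.val_mul, map_mul, mul_assoc, ← hw, hu, ← mul_assoc, ← map_mul, Units.inv_mul,
      map_one, one_mul]

end Units

namespace Matrix

variable {R : Type*} {n : ℕ}

def IsStrictlyUpperTriangular [Zero R] (M : Matrix (Fin n) (Fin n) R) : Prop :=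
  ∀ i j, j ≤ i → M i j = 0

namespace IsStrictlyUpperTriangular

theorem map [Zero R] {S : Type*} [Zero S] {M : Matrix (Fin n) (Fin n) R}
    (hM : M.IsStrictlyUpperTriangular) {f : R → S} (hf : f 0 = 0) :
    (M.map f).IsStrictlyUpperTriangular := fun i j hij => by
  rw [map_apply, hM i j hij, hf]

theorem eq_zero_of_lt_two [Zero R] {M : Matrix (Fin n) (Fin n) R}
    (hM : M.IsStrictlyUpperTriangular) (hn : n < 2) : M = 0 := by
  ext i j
  exact hM i j (by omega)

variable [NonUnitalNonAssocSemiring R] {M N : Matrix (Fin n) (Fin n) R}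

theorem mul_apply_of_val_eq_succ (hN : N.IsStrictlyUpperTriangular) (hM : M.IsUpperTriangular)
    {i j : Fin n} (hij : (j : ℕ) = i + 1) : (N * M) i j = N i j * M j j := by
  rw [mul_apply]
  refine Fintype.sum_eq_single j fun k hk => ?_
  rcases le_or_gt k i with hki | hik
  · rw [hN i k hki, zero_mul]
  · rw [hM (show j < k by omega), mul_zero]

theorem single_last_mul {m : ℕ} {N : Matrix (Fin (m + 1)) (Fin (m + 1)) R}
    (hN : N.IsStrictlyUpperTriangular) (i : Fin (m + 1)) (c : R) :
    single i (Fin.last m) c * N = 0 := by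
  ext a b
  by_cases ha : a = i
  · rw [ha, single_mul_apply_same, hN _ _ (Fin.le_last b), mul_zero, zero_apply]
  · rw [single_mul_apply_of_ne _ _ _ _ _ ha, zero_apply]

theorem mul_single_zero {m : ℕ} {N : Matrix (Fin (m + 1)) (Fin (m + 1)) R}
    (hN : N.IsStrictlyUpperTriangular) (j : Fin (m + 1)) (c : R) :
    N * single 0 j c = 0 := by
  ext a b
  by_cases hb : b = j
  · rw [hb, mul_single_apply_same, hN _ _ (Fin.zero_le a), zero_mul, zero_apply]
  · rw [mul_single_apply_of_ne _ _ _ _ _ hb, zero_apply]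

end IsStrictlyUpperTriangular

theorem IsUpperTriangular.mul_apply_of_val_eq_succ [NonUnitalNonAssocSemiring R]
    {M N : Matrix (Fin n) (Fin n) R} (hM : M.IsUpperTriangular)
    (hN : N.IsStrictlyUpperTriangular) {i j : Fin n} (hij : (j : ℕ) = i + 1) :
    (M * N) i j = M i i * N i j := by
  rw [mul_apply]
  refine Fintype.sum_eq_single i fun k hk => ?_
  rcases lt_or_gt_of_ne hk with hki | hik
  · rw [hM hki, zero_mul]
  · rw [hN k j (show j ≤ k by omega), mul_zero]

section ClearCorner

variable {m : ℕ}

def clearCorner [AddGroup R] (M : Matrix (Fin (m + 1)) (Fin (m + 1)) R) :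
    Matrix (Fin (m + 1)) (Fin (m + 1)) R :=
  M - single 0 (Fin.last m) (M 0 (Fin.last m))

variable [NonUnitalNonAssocRing R] {M A B : Matrix (Fin (m + 1)) (Fin (m + 1)) R}

theorem clearCorner_mul_eq_mul (hA : A.IsStrictlyUpperTriangular)
    (hB : B.IsStrictlyUpperTriangular) (h : M * A = B * M) :
    M.clearCorner * A = B * M.clearCorner := by
  rw [clearCorner, sub_mul, mul_sub, hA.single_last_mul, hB.mul_single_zero, h]

theorem IsUpperTriangular.clearCorner (hM : M.IsUpperTriangular) :
    M.clearCorner.IsUpperTriangular :=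
  hM.sub (blockTriangular_single (b := id) (Fin.zero_le _) _)

theorem clearCorner_apply_of_ne {i j : Fin (m + 1)} (h : ¬(i = 0 ∧ j = Fin.last m)) :
    M.clearCorner i j = M i j := by
  have h' : ¬(0 = i ∧ Fin.last m = j) := fun ⟨hi, hj⟩ => h ⟨hi.symm, hj.symm⟩
  simp [clearCorner, h']

theorem clearCorner_apply_zero_last : M.clearCorner 0 (Fin.last m) = 0 := by
  simp [clearCorner]

end ClearCorner

section Intertwining

variable {ι K : Type*} [CommRing K] {A B : ι → Matrix (Fin n) (Fin n) K}
  {P : Matrix (Fin n) (Fin n) K}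

theorem isUpperTriangular_of_mul_eq_mul [IsDomain K] (hA : ∀ v, (A v).IsStrictlyUpperTriangular)
    (hB : ∀ v, (B v).IsStrictlyUpperTriangular) (hP : ∀ v, P * A v = B v * P)
    (hB₀ : ∀ i j : Fin n, (j : ℕ) = i + 1 → ∃ v, B v i j ≠ 0) : P.IsUpperTriangular := by
  intro i j (hji : j < i)
  induction' hc : (j : ℕ) using Nat.strong_induction_on with c ihcol generalizing i j
  induction' hd : n - (i : ℕ) using Nat.strong_induction_on with d ihrow generalizing i
  obtain ⟨I, hI⟩ : ∃ I : Fin n, (i : ℕ) = I + 1 := ⟨⟨i - 1, by omega⟩, by simp; omega⟩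
  obtain ⟨v, hv⟩ := hB₀ I i hI
  have hPA : (P * A v) I j = 0 := by
    rw [mul_apply]
    refine Finset.sum_eq_zero fun k _ => ?_
    rcases lt_or_ge k j with hkj | hjk
    · rw [ihcol k (by omega) (show k < I by omega) rfl, zero_mul]
    · rw [hA v k j hjk, mul_zero]
  have hBP : (B v * P) I j = B v I i * P i j := by
    rw [mul_apply]
    refine Fintype.sum_eq_single i fun k hki => ?_
    rcases le_or_gt k I with hkI | hIk
    · rw [hB v I k hkI, zero_mul]
    · rw [ihrow (n - k) (by omega) (show j < k by omega) rfl, mul_zero]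
  rw [← hP v, hPA] at hBP
  exact (mul_eq_zero.mp hBP.symm).resolve_left hv

theorem IsUpperTriangular.diag_ne_zero [IsDomain K] (hP : P.IsUpperTriangular) (hPu : IsUnit P)
    (i : Fin n) : P i i ≠ 0 := by
  have hdet := (P.isUnit_iff_isUnit_det.mp hPu).ne_zero
  rw [det_of_isUpperTriangular hP, Finset.prod_ne_zero_iff] at hdet
  exact hdet i (Finset.mem_univ i)

theorem IsUpperTriangular.diag_mul_eq_mul_diag {A B : Matrix (Fin n) (Fin n) K}
    (hP : P.IsUpperTriangular) (hA : A.IsStrictlyUpperTriangular)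
    (hB : B.IsStrictlyUpperTriangular) (h : P * A = B * P) {i j : Fin n}
    (hij : (j : ℕ) = i + 1) : P i i * A i j = B i j * P j j := by
  rw [← hP.mul_apply_of_val_eq_succ hA hij, h, hB.mul_apply_of_val_eq_succ hP hij]

end Intertwining

section Integrality

variable {ι V K : Type*} [CommRing V] [CommRing K] [Algebra V K]

local notation "φ" => algebraMap V K

variable {r r' : ι → Matrix (Fin n) (Fin n) V} {P : Matrix (Fin n) (Fin n) K}

theorem apply_mem_range_of_next_col (hr : ∀ v, (r v).IsStrictlyUpperTriangular)
    (hr' : ∀ v, (r' v).IsStrictlyUpperTriangular) (hP : P.IsUpperTriangular)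
    (hdiag : ∀ i, ∃ u : Vˣ, φ u = P i i) (hconj : ∀ v, P * (r v).map φ = (r' v).map φ * P)
    (hwide : ∀ i j k l : Fin n, (j : ℕ) = i + 1 → (l : ℕ) = k + 1 → i ≠ k →
      ∃ v, r v i j = 0 ∧ r v k l = 1)
    {i j J : Fin n} (hij : i < j) (hJ : (J : ℕ) = j + 1)
    (ih : ∀ i' j' : Fin n, (j' : ℕ) + i < j + i' → (0 < (i' : ℕ) ∨ (j' : ℕ) + 1 < n) →
      P i' j' ∈ RingHom.range φ) :
    P i j ∈ RingHom.range φ := by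
  obtain ⟨i₁, hi₁⟩ : ∃ i₁ : Fin n, (i₁ : ℕ) = i + 1 := ⟨⟨i + 1, by omega⟩, rfl⟩
  obtain ⟨v, hv₀, hv₁⟩ := hwide i i₁ j J hi₁ hJ hij.ne
  have hr'₀ : φ (r' v i i₁) = 0 := by
    have h := hP.diag_mul_eq_mul_diag ((hr v).map (map_zero _)) ((hr' v).map (map_zero _))
      (hconj v) hi₁
    rw [map_apply, map_apply, hv₀, map_zero, mul_zero] at h
    obtain ⟨u, hu⟩ := hdiag i₁
    exact ((hu ▸ (u.isUnit.map φ)).mul_left_eq_zero).mp h.symm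
  have hBP : ((r' v).map φ * P) i J ∈ RingHom.range φ := by
    rw [mul_apply]
    refine Subring.sum_mem _ fun k _ => ?_
    rcases lt_trichotomy k i₁ with hk | rfl | hk
    · rw [map_apply, hr' v i k (by omega), map_zero, zero_mul]
      exact zero_mem _
    · rw [map_apply, hr'₀, zero_mul]
      exact zero_mem _
    · exact mul_mem (RingHom.mem_range_self _ _) (ih k J (by omega) (Or.inl (by omega)))
  rw [← hconj, mul_apply, ← Finset.add_sum_erase _ _ (Finset.mem_univ j), map_apply, hv₁,
    map_one, mul_one] at hBP
  refine (add_mem_cancel_right (Subring.sum_mem _ fun k hk => ?_)).mp hBP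
  rcases lt_or_gt_of_ne (Finset.ne_of_mem_erase hk) with hkj | hjk
  · exact mul_mem (ih i k (by omega) (Or.inr (by omega))) (RingHom.mem_range_self _ _)
  · rw [map_apply, hr v k J (by omega), map_zero, mul_zero]
    exact zero_mem _

theorem apply_mem_range_of_prev_row (hr : ∀ v, (r v).IsStrictlyUpperTriangular)
    (hr' : ∀ v, (r' v).IsStrictlyUpperTriangular) (hP : P.IsUpperTriangular)
    (hdiag : ∀ i, ∃ u : Vˣ, φ u = P i i) (hconj : ∀ v, P * (r v).map φ = (r' v).map φ * P)
    (hwide : ∀ i j k l : Fin n, (j : ℕ) = i + 1 → (l : ℕ) = k + 1 → i ≠ k →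
      ∃ v, r v i j = 0 ∧ r v k l = 1)
    {I i l j : Fin n} (hI : (i : ℕ) = I + 1) (hl : (j : ℕ) = l + 1) (hj : (j : ℕ) + 1 = n)
    (hij : i < j)
    (ih : ∀ i' j' : Fin n, (j' : ℕ) + i < j + i' → (0 < (i' : ℕ) ∨ (j' : ℕ) + 1 < n) →
      P i' j' ∈ RingHom.range φ) :
    P i j ∈ RingHom.range φ := by
  obtain ⟨v, hv₀, hv₁⟩ := hwide l j I i hl hI (by omega)
  obtain ⟨uI, huI⟩ := hdiag I
  obtain ⟨ui, hui⟩ := hdiag i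
  have hr'₁ : φ (r' v I i) * φ ui = φ uI := by
    have h := hP.diag_mul_eq_mul_diag ((hr v).map (map_zero _)) ((hr' v).map (map_zero _))
      (hconj v) hI
    rw [map_apply, map_apply, hv₁, map_one, mul_one, ← huI, ← hui] at h
    exact h.symm
  have hPA : (P * (r v).map φ) I j ∈ RingHom.range φ := by
    rw [mul_apply]
    refine Subring.sum_mem _ fun k _ => ?_
    rcases lt_trichotomy k l with hk | rfl | hk
    · exact mul_mem (ih I k (by omega) (Or.inr (by omega))) (RingHom.mem_range_self _ _)
    · rw [map_apply, hv₀, map_zero, mul_zero]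
      exact zero_mem _
    · rw [map_apply, hr v k j (by omega), map_zero, mul_zero]
      exact zero_mem _
  rw [hconj, mul_apply, ← Finset.add_sum_erase _ _ (Finset.mem_univ i), map_apply] at hPA
  have hBP := (add_mem_cancel_right (Subring.sum_mem _ fun k hk => ?_)).mp hPA
  · have hPij : P i j = φ ↑(ui * uI⁻¹) * (φ (r' v I i) * P i j) := by
      rw [Units.val_mul, map_mul, mul_comm (φ ui), mul_assoc, ← mul_assoc (φ ui), mul_comm (φ ui),
        hr'₁, ← mul_assoc, ← map_mul, Units.inv_mul, map_one, one_mul]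
    rw [hPij]
    exact mul_mem (RingHom.mem_range_self _ _) hBP
  · rcases lt_or_gt_of_ne (Finset.ne_of_mem_erase hk) with hki | hik
    · rw [map_apply, hr' v I k (by omega), map_zero, zero_mul]
      exact zero_mem _
    · exact mul_mem (RingHom.mem_range_self _ _) (ih k j (by omega) (Or.inl (by omega)))

theorem apply_mem_range_of_wide (hr : ∀ v, (r v).IsStrictlyUpperTriangular)
    (hr' : ∀ v, (r' v).IsStrictlyUpperTriangular) (hP : P.IsUpperTriangular)
    (hdiag : ∀ i, ∃ u : Vˣ, φ u = P i i) (hconj : ∀ v, P * (r v).map φ = (r' v).map φ * P)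
    (hwide : ∀ i j k l : Fin n, (j : ℕ) = i + 1 → (l : ℕ) = k + 1 → i ≠ k →
      ∃ v, r v i j = 0 ∧ r v k l = 1)
    (i j : Fin n) (hij : 0 < (i : ℕ) ∨ (j : ℕ) + 1 < n) : P i j ∈ RingHom.range φ := by
  induction' hd : (j : ℕ) + n - i using Nat.strong_induction_on with d ih generalizing i j
  have ih' : ∀ i' j' : Fin n, (j' : ℕ) + i < j + i' → (0 < (i' : ℕ) ∨ (j' : ℕ) + 1 < n) →
      P i' j' ∈ RingHom.range φ :=
    fun i' j' hlt hc => ih _ (by omega) i' j' hc rfl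
  rcases lt_trichotomy j i with hji | rfl | hij
  · rw [hP hji]
    exact zero_mem _
  · obtain ⟨u, hu⟩ := hdiag j
    exact ⟨u, hu⟩
  · by_cases hj : (j : ℕ) + 1 < n
    · exact apply_mem_range_of_next_col hr hr' hP hdiag hconj hwide hij
        (J := ⟨j + 1, hj⟩) rfl ih'
    · exact apply_mem_range_of_prev_row hr hr' hP hdiag hconj hwide
        (I := ⟨i - 1, by omega⟩) (l := ⟨j - 1, by omega⟩) (by simp; omega) (by simp; omega)
        (by omega) hij ih'

theorem exists_isUnit_map_eq (hφ : Function.Injective φ) {M : Matrix (Fin n) (Fin n) K}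
    (hM : M.IsUpperTriangular) (hdiag : ∀ i, ∃ u : Vˣ, φ u = M i i)
    (hmem : ∀ i j, M i j ∈ RingHom.range φ) :
    ∃ Q : Matrix (Fin n) (Fin n) V, IsUnit Q ∧ Q.map φ = M := by
  choose q hq using hmem
  choose u hu using hdiag
  have hQ : (of q).map φ = M := ext hq
  refine ⟨of q, ?_, hQ⟩
  have hdet : (of q).det = ↑(∏ i, u i) := hφ <| by
    rw [RingHom.map_det, RingHom.mapMatrix_apply, hQ, det_of_isUpperTriangular hM, Units.coe_prod,
      map_prod]
    simp only [hu]
  rw [isUnit_iff_isUnit_det, hdet]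
  exact Units.isUnit _

end Integrality

section Field

variable {ι V K : Type*} [CommRing V] [Field K] [Algebra V K]

local notation "φ" => algebraMap V K

theorem exists_isUnit_mul_eq_mul_of_wide (hφ : Function.Injective φ) {m : ℕ}
    {r r' : ι → Matrix (Fin (m + 2)) (Fin (m + 2)) V}
    (hr : ∀ v, (r v).IsStrictlyUpperTriangular) (hr' : ∀ v, (r' v).IsStrictlyUpperTriangular)
    (hwide : ∀ i j k l : Fin (m + 2), (j : ℕ) = i + 1 → (l : ℕ) = k + 1 → i ≠ k →
      ∃ v, r v i j = 0 ∧ r v k l = 1)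
    {P : Matrix (Fin (m + 2)) (Fin (m + 2)) K} (hP : P.IsUpperTriangular) (hP₀ : P 0 0 ≠ 0)
    (hdiag : ∀ i, ∃ u : Vˣ, P i i = φ u * P 0 0)
    (hconj : ∀ v, P * (r v).map φ = (r' v).map φ * P) :
    ∃ Q : Matrix (Fin (m + 2)) (Fin (m + 2)) V, IsUnit Q ∧ ∀ v, Q * r v = r' v * Q := by
  set M := clearCorner ((P 0 0)⁻¹ • P) with hM
  have hMconj : ∀ v, M * (r v).map φ = (r' v).map φ * M := fun v =>
    clearCorner_mul_eq_mul ((hr v).map (map_zero φ)) ((hr' v).map (map_zero φ))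
      (by rw [smul_mul_assoc, hconj, mul_smul_comm])
  have hMtri : M.IsUpperTriangular := IsUpperTriangular.clearCorner fun i j h => by simp [hP h]
  have hMdiag : ∀ i, ∃ u : Vˣ, φ u = M i i := fun i => by
    obtain ⟨u, hu⟩ := hdiag i
    refine ⟨u, ?_⟩
    rw [hM, clearCorner_apply_of_ne fun h => (Fin.last_pos (n := m)).ne (h.1 ▸ h.2),
      smul_apply, hu, smul_eq_mul, mul_comm, mul_inv_cancel_right₀ hP₀]
  obtain ⟨Q, hQ, hQM⟩ := exists_isUnit_map_eq hφ hMtri hMdiag fun i j => by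
    by_cases hc : i = 0 ∧ j = Fin.last _
    · rw [hM, hc.1, hc.2, clearCorner_apply_zero_last]
      exact zero_mem _
    · refine apply_mem_range_of_wide hr hr' hMtri hMdiag hMconj hwide i j ?_
      rw [Fin.ext_iff, Fin.ext_iff, Fin.val_zero, Fin.val_last] at hc
      omega
  refine ⟨Q, hQ, fun v => map_injective hφ ?_⟩
  dsimp only
  rw [Matrix.map_mul, Matrix.map_mul, hQM, hMconj]

end Field

end Matrix

attribute [local instance 100] LieRing.ofAssociativeRing

/-- Let `V` be a valuation ring with fraction field `K` and `h` a Lie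
algebra over `V`.  Let `r, r' : h → n_n(V)` be Lie algebra homomorphisms into the strictly
upper triangular matrices over `V` such that for each of them (a) each successor entry
functional `λ_{i,i+1} : h → V` is surjective, and (b) for all `i ≠ j` the map
`v ↦ (λ_{i,i+1} v, λ_{j,j+1} v)` is surjective onto `V × V` (wideness over `V`).  If `r` and
`r'` become conjugate over `K` by some `P ∈ GL_n(K)`, then they are already conjugate over `V`
by some `Q ∈ GL_n(V)`. -/
theorem stmt_18 {V : Type*} [CommRing V]
    {K : Type*} [Field K] [Algebra V K] [IsFractionRing V K]
    {h : Type*} [LieRing h] [LieAlgebra V h] {n : ℕ}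
    (r r' : h →ₗ⁅V⁆ Matrix (Fin n) (Fin n) V)
    (hr : ∀ (v : h) (i j : Fin n), j ≤ i → r v i j = 0)
    (hr' : ∀ (v : h) (i j : Fin n), j ≤ i → r' v i j = 0)
    (hsurj : ∀ (i : ℕ) (hi : i + 1 < n) (c : V),
      ∃ v : h, r v ⟨i, by omega⟩ ⟨i + 1, hi⟩ = c)
    (hsurj' : ∀ (i : ℕ) (hi : i + 1 < n) (c : V),
      ∃ v : h, r' v ⟨i, by omega⟩ ⟨i + 1, hi⟩ = c)
    (hwide : ∀ (i j : ℕ) (hi : i + 1 < n) (hj : j + 1 < n), i ≠ j → ∀ c d : V,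
      ∃ v : h, r v ⟨i, by omega⟩ ⟨i + 1, hi⟩ = c ∧ r v ⟨j, by omega⟩ ⟨j + 1, hj⟩ = d)
    (P : Matrix (Fin n) (Fin n) K) (hP : IsUnit P)
    (hconj : ∀ v : h,
      P * (r v).map (algebraMap V K) = (r' v).map (algebraMap V K) * P) :
    ∃ Q : Matrix (Fin n) (Fin n) V, IsUnit Q ∧ ∀ v : h, Q * r v = r' v * Q := by
  have hr₀ : ∀ v, (r v).IsStrictlyUpperTriangular := hr
  have hr'₀ : ∀ v, (r' v).IsStrictlyUpperTriangular := hr'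
  rcases lt_or_ge n 2 with hn | hn
  · exact ⟨1, isUnit_one, fun v => by
      rw [(hr₀ v).eq_zero_of_lt_two hn, (hr'₀ v).eq_zero_of_lt_two hn, mul_zero, zero_mul]⟩
  obtain ⟨m, rfl⟩ : ∃ m, n = m + 2 := ⟨n - 2, by omega⟩
  have hφ : Function.Injective (algebraMap V K) := IsFractionRing.injective V K
  have hA := fun v => (hr₀ v).map (map_zero (algebraMap V K))
  have hB := fun v => (hr'₀ v).map (map_zero (algebraMap V K))
  have hPtri : P.IsUpperTriangular := Matrix.isUpperTriangular_of_mul_eq_mul hA hB hconj <|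
    Fin.forall_val_eq_succ.mpr fun i hi => by
      obtain ⟨v, hv⟩ := hsurj' i hi 1
      exact ⟨v, by simp [hv]⟩
  have hPdiag : ∀ i, ∃ u : Vˣ, P i i = algebraMap V K u * P 0 0 :=
    exists_unit_eq_mul_apply_zero (d := fun i => P i i) <| Fin.forall_val_eq_succ.mpr fun i hi =>
      exists_unit_eq_mul_of_forall_mul_eq hφ (hPtri.diag_ne_zero hP _)
        (fun v => hPtri.diag_mul_eq_mul_diag (hA v) (hB v) (hconj v) rfl) (hsurj i hi 1)
        (hsurj' i hi 1)
  have hwide₀ : ∀ i j k l : Fin (m + 2), (j : ℕ) = i + 1 → (l : ℕ) = k + 1 → i ≠ k →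
      ∃ v, r v i j = 0 ∧ r v k l = 1 := by
    rintro ⟨i, _⟩ ⟨_, hj⟩ ⟨k, _⟩ ⟨_, hl⟩ (rfl : _ = i + 1) (rfl : _ = k + 1) hik
    exact hwide i k hj hl (fun h => hik (Fin.ext h)) 0 1
  exact Matrix.exists_isUnit_mul_eq_mul_of_wide hφ hr₀ hr'₀ hwide₀ hPtri (hPtri.diag_ne_zero hP 0)
    hPdiag hconj
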